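/- arXiv:1810.09086 — 3 statements merged into one kernel-verified Lean document; each statement's English description precedes it below -/
import Mathlib

section
/- Let N ≥ 1, 0 < b < 2 and σ = (2−b)/N (mass-critical case). Let v ∈ H¹(ℝᴺ;ℂ) with ‖v‖_{L²}^{(4−2b)/N} ≤ (N+2−b)/(N·K_opt) (equivalently, ‖v‖_{L²} ≤ ‖Q‖_{L²}), and let θ : ℝᴺ → ℝ be differentiable with |v|·|∇θ| ∈ L²(ℝᴺ). Then |∫_{ℝᴺ} Im(v·∇v̄)·∇θ dx|² ≤ 2·E[v]·∫_{ℝᴺ} |v|²|∇θ|² dx. -/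
open MeasureTheory Filter Topology

noncomputable section

abbrev RN (N : ℕ) := EuclideanSpace ℝ (Fin N)

/-- The `i`-th partial derivative of `u` at `x`. -/
def egrad {N : ℕ} (u : RN N → ℂ) (x : RN N) (i : Fin N) : ℂ :=
  fderiv ℝ u x (EuclideanSpace.single i 1)

/-- `|∇u(x)|²`. -/
def gradNormSq {N : ℕ} (u : RN N → ℂ) (x : RN N) : ℝ :=
  ∑ i, ‖egrad u x i‖ ^ 2

/-- Membership in (a classical version of) `H¹(ℝᴺ; ℂ)`. -/
def InH1 {N : ℕ} (u : RN N → ℂ) : Prop :=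
  MemLp u 2 (volume : Measure (RN N)) ∧ Differentiable ℝ u ∧ Integrable (gradNormSq u)

def L2sq {N : ℕ} (u : RN N → ℂ) : ℝ := ∫ x, ‖u x‖ ^ 2
def L2norm {N : ℕ} (u : RN N → ℂ) : ℝ := Real.sqrt (L2sq u)
def gradL2sq {N : ℕ} (u : RN N → ℂ) : ℝ := ∫ x, gradNormSq u x
def gradL2norm {N : ℕ} (u : RN N → ℂ) : ℝ := Real.sqrt (gradL2sq u)

/-- `∫ |x|^{-b} |u|^{2σ+2}`. -/
def potential {N : ℕ} (b σ : ℝ) (u : RN N → ℂ) : ℝ :=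
  ∫ x : RN N, ‖x‖ ^ (-b) * ‖u x‖ ^ (2*σ+2)

/-- The INLS energy. -/
def energy {N : ℕ} (b σ : ℝ) (u : RN N → ℂ) : ℝ :=
  1/2 * gradL2sq u - 1/(2*σ+2) * potential b σ u

/-- The sharp Gagliardo–Nirenberg constant. -/
def Kopt (N : ℕ) (b σ : ℝ) : ℝ :=
  sSup { r : ℝ | ∃ u : RN N → ℂ, InH1 u ∧ u ≠ 0 ∧
    r = potential b σ u /
      (gradL2norm u ^ ((N:ℝ)*σ + b) * L2norm u ^ (2*σ+2 - ((N:ℝ)*σ+b))) }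

/-- Radial functions. -/
def IsRadial {N : ℕ} {α : Type*} (f : RN N → α) : Prop :=
  ∀ x y : RN N, ‖x‖ = ‖y‖ → f x = f y

/-!
Multiplying `v` by the phase `e^{ilθ}` preserves the mass and the potential term, and turns the
energy into the quadratic `E[v] + l²/2 ∫|v|²|∇θ|² - l ∫ Im(v ∇v̄)·∇θ` in `l`. In the
mass-critical case the sharp Gagliardo–Nirenberg inequality makes the energy of every function
with mass at most that of the ground state nonnegative, so this quadratic is nonnegative and its
discriminant is `≤ 0`.
-/

section Modulation

variable {N : ℕ}

lemma gradient_apply_eq_fderiv (θ : RN N → ℝ) (x : RN N) (i : Fin N) :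
    gradient θ x i = fderiv ℝ θ x (EuclideanSpace.single i 1) := by
  rw [← inner_gradient_left, EuclideanSpace.inner_single_right]
  simp

lemma fderiv_apply_eq_sum_egrad (u : RN N → ℂ) (x w : RN N) :
    fderiv ℝ u x w = ∑ i, w i • egrad u x i := by
  conv_lhs => rw [← (EuclideanSpace.basisFun (Fin N) ℝ).sum_repr w]
  simp [map_sum, egrad]

lemma norm_fderiv_apply_le (u : RN N → ℂ) (x w : RN N) :
    ‖fderiv ℝ u x w‖ ≤ ‖w‖ * √(gradNormSq u x) := by
  rw [fderiv_apply_eq_sum_egrad, EuclideanSpace.norm_eq, gradNormSq]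
  calc ‖∑ i, w i • egrad u x i‖ ≤ ∑ i, ‖w i‖ * ‖egrad u x i‖ :=
        (norm_sum_le _ _).trans_eq (by simp only [norm_smul])
    _ ≤ _ := Real.sum_mul_le_sqrt_mul_sqrt _ _ _

lemma norm_sq_add_ofReal_mul_I_mul (a c : ℂ) (t : ℝ) :
    ‖a + t * Complex.I * c‖ ^ 2 = ‖a‖ ^ 2 + t ^ 2 * ‖c‖ ^ 2 - 2 * t * (c * star a).im := by
  simp only [Complex.sq_norm, Complex.normSq_apply, Complex.add_re, Complex.add_im,
    Complex.mul_re, Complex.mul_im, Complex.ofReal_re, Complex.ofReal_im, Complex.I_re,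
    Complex.I_im, Complex.star_def, Complex.conj_re, Complex.conj_im]
  ring

def modulate (θ : RN N → ℝ) (l : ℝ) (v : RN N → ℂ) (x : RN N) : ℂ :=
  Complex.exp ((l * θ x : ℝ) * Complex.I) * v x

def momentumDensity (v : RN N → ℂ) (θ : RN N → ℝ) (x : RN N) : ℝ :=
  (v x * star (fderiv ℝ v x (gradient θ x))).im

variable {v : RN N → ℂ} {θ : RN N → ℝ}

lemma norm_modulate (l : ℝ) (x : RN N) : ‖modulate θ l v x‖ = ‖v x‖ := by
  rw [modulate, norm_mul, Complex.norm_exp_ofReal_mul_I, one_mul]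

lemma fderiv_modulate_apply (hv : Differentiable ℝ v) (hθ : Differentiable ℝ θ) (l : ℝ)
    (x w : RN N) :
    fderiv ℝ (modulate θ l v) x w = Complex.exp ((l * θ x : ℝ) * Complex.I) *
      (fderiv ℝ v x w + (l * fderiv ℝ θ x w : ℝ) * Complex.I * v x) := by
  have hphase := (Complex.ofRealCLM.hasFDerivAt.comp x
    ((hθ x).hasFDerivAt.const_mul l)).mul_const Complex.I
  have hmod : HasFDerivAt (modulate θ l v) _ x := hphase.cexp.mul (hv x).hasFDerivAt
  rw [hmod.fderiv]
  simp only [add_apply, smul_apply, ContinuousLinearMap.comp_apply, Function.comp_apply,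
    Complex.ofRealCLM_apply, smul_eq_mul, Complex.ofReal_mul]
  ring

lemma gradNormSq_modulate (hv : Differentiable ℝ v) (hθ : Differentiable ℝ θ) (l : ℝ)
    (x : RN N) :
    gradNormSq (modulate θ l v) x = gradNormSq v x + l ^ 2 * (‖v x‖ ^ 2 * ‖gradient θ x‖ ^ 2)
      - 2 * l * momentumDensity v θ x := by
  have hmomentum :
      momentumDensity v θ x = ∑ i, gradient θ x i * (v x * star (egrad v x i)).im := by
    rw [momentumDensity, fderiv_apply_eq_sum_egrad, star_sum, Finset.mul_sum, Complex.im_sum]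
    refine Finset.sum_congr rfl fun i _ => ?_
    rw [star_smul, star_trivial, mul_smul_comm, Complex.smul_im, smul_eq_mul]
  simp only [gradNormSq, egrad, fderiv_modulate_apply hv hθ, norm_mul,
    Complex.norm_exp_ofReal_mul_I, one_mul, ← gradient_apply_eq_fderiv,
    norm_sq_add_ofReal_mul_I_mul, hmomentum, EuclideanSpace.real_norm_sq_eq, Finset.mul_sum,
    ← Finset.sum_add_distrib, ← Finset.sum_sub_distrib]
  exact Finset.sum_congr rfl fun i _ => by ring

lemma abs_momentumDensity_le (v : RN N → ℂ) (θ : RN N → ℝ) (x : RN N) :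
    |momentumDensity v θ x| ≤ (‖v x‖ ^ 2 * ‖gradient θ x‖ ^ 2 + gradNormSq v x) / 2 := by
  have hG : √(gradNormSq v x) ^ 2 = gradNormSq v x :=
    Real.sq_sqrt (Finset.sum_nonneg fun _ _ => sq_nonneg _)
  calc |momentumDensity v θ x| ≤ ‖v x‖ * ‖fderiv ℝ v x (gradient θ x)‖ := by
        rw [momentumDensity, ← norm_star (fderiv ℝ v x _), ← norm_mul]
        exact Complex.abs_im_le_norm _
    _ ≤ ‖v x‖ * (‖gradient θ x‖ * √(gradNormSq v x)) := by
        gcongr; exact norm_fderiv_apply_le v x _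
    _ ≤ _ := by
        nlinarith [two_mul_le_add_sq (‖v x‖ * ‖gradient θ x‖) √(gradNormSq v x)]

lemma measurable_momentumDensity (hv : Measurable v) (θ : RN N → ℝ) :
    Measurable (momentumDensity v θ) := by
  have hgrad : Measurable (gradient θ) :=
    (InnerProductSpace.toDual ℝ (RN N)).symm.continuous.measurable.comp (measurable_fderiv ℝ θ)
  have hderiv : Measurable fun x => fderiv ℝ v x (gradient θ x) :=
    isBoundedBilinearMap_apply.continuous.measurable.comp
      ((measurable_fderiv ℝ v).prodMk hgrad)
  exact Complex.measurable_im.comp (hv.mul (continuous_star.measurable.comp hderiv))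

lemma integrable_momentumDensity (hv : Measurable v) (hA : Integrable (gradNormSq v))
    (hB : Integrable fun x => ‖v x‖ ^ 2 * ‖gradient θ x‖ ^ 2) :
    Integrable (momentumDensity v θ) :=
  ((hB.add hA).div_const 2).mono' (measurable_momentumDensity hv θ).aestronglyMeasurable
    (ae_of_all _ fun x => (Real.norm_eq_abs _).trans_le (abs_momentumDensity_le v θ x))

lemma gradL2sq_modulate (hv : InH1 v) (hθ : Differentiable ℝ θ)
    (hB : Integrable fun x => ‖v x‖ ^ 2 * ‖gradient θ x‖ ^ 2) (l : ℝ) :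
    gradL2sq (modulate θ l v) = gradL2sq v + l ^ 2 * (∫ x, ‖v x‖ ^ 2 * ‖gradient θ x‖ ^ 2)
      - 2 * l * ∫ x, momentumDensity v θ x := by
  have hC := integrable_momentumDensity hv.2.1.continuous.measurable hv.2.2 hB
  simp only [gradL2sq, gradNormSq_modulate hv.2.1 hθ]
  rw [integral_sub, integral_add, integral_const_mul, integral_const_mul]
  · exact hv.2.2
  · exact hB.const_mul _
  · exact hv.2.2.add (hB.const_mul _)
  · exact hC.const_mul _

lemma inH1_modulate (hv : InH1 v) (hθ : Differentiable ℝ θ)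
    (hB : Integrable fun x => ‖v x‖ ^ 2 * ‖gradient θ x‖ ^ 2) (l : ℝ) :
    InH1 (modulate θ l v) := by
  have hdiff : Differentiable ℝ (modulate θ l v) := by
    have := hv.2.1
    unfold modulate
    fun_prop
  refine ⟨hv.1.of_le hdiff.continuous.aestronglyMeasurable
    (ae_of_all _ fun x => (norm_modulate l x).le), hdiff, ?_⟩
  rw [funext (gradNormSq_modulate hv.2.1 hθ l)]
  exact (hv.2.2.add (hB.const_mul _)).sub
    ((integrable_momentumDensity hv.2.1.continuous.measurable hv.2.2 hB).const_mul _)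

lemma modulate_ne_zero (hv0 : v ≠ 0) (l : ℝ) :
    modulate θ l v ≠ 0 := fun h =>
  hv0 <| funext fun x => (mul_eq_zero.mp (congrFun h x)).resolve_left (Complex.exp_ne_zero _)

lemma L2norm_modulate (l : ℝ) : L2norm (modulate θ l v) = L2norm v := by
  simp only [L2norm, L2sq, norm_modulate]

lemma energy_modulate (hv : InH1 v) (hθ : Differentiable ℝ θ)
    (hB : Integrable fun x => ‖v x‖ ^ 2 * ‖gradient θ x‖ ^ 2) (b σ l : ℝ) :
    energy b σ (modulate θ l v) = energy b σ v
      + l ^ 2 / 2 * (∫ x, ‖v x‖ ^ 2 * ‖gradient θ x‖ ^ 2) - l * ∫ x, momentumDensity v θ x := by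
  simp only [energy, gradL2sq_modulate hv hθ hB, potential, norm_modulate]
  ring

end Modulation

section GagliardoNirenberg

variable {N : ℕ} {b σ : ℝ} {u : RN N → ℂ}

lemma L2norm_pos (hu : InH1 u) (hu0 : u ≠ 0) : 0 < L2norm u := by
  obtain ⟨x₀, hx₀⟩ := Function.ne_iff.mp hu0
  have hcont := hu.2.1.continuous
  refine Real.sqrt_pos.mpr ?_
  rw [L2sq, integral_pos_iff_support_of_nonneg (fun x => by positivity)
    ((memLp_two_iff_integrable_sq_norm hcont.aestronglyMeasurable).mp hu.1)]
  have hsupp : {x | u x ≠ 0} ⊆ Function.support fun x => ‖u x‖ ^ 2 := fun x hx => by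
    simpa using hx
  exact ((isOpen_compl_singleton.preimage hcont).measure_pos volume ⟨x₀, hx₀⟩).trans_le
    (measure_mono hsupp)

lemma potential_le_Kopt_mul (hK : 0 < Kopt N b σ) (hu : InH1 u) (hu0 : u ≠ 0)
    (hden : 0 < gradL2norm u ^ ((N : ℝ) * σ + b) * L2norm u ^ (2 * σ + 2 - ((N : ℝ) * σ + b))) :
    potential b σ u ≤ Kopt N b σ *
      (gradL2norm u ^ ((N : ℝ) * σ + b) * L2norm u ^ (2 * σ + 2 - ((N : ℝ) * σ + b))) := by
  -- `sSup` of a set that is not bounded above is `0`, which `0 < Kopt N b σ` excludes.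
  unfold Kopt at hK ⊢
  rw [← div_le_iff₀ hden]
  refine le_csSup ?_ ⟨u, hu, hu0, rfl⟩
  by_contra hbdd
  rw [Real.sSup_of_not_bddAbove hbdd] at hK
  exact lt_irrefl _ hK

lemma energy_nonneg_of_mass_le (hcrit : (N : ℝ) * σ + b = 2) (hσ : -1 < σ)
    (hK : 0 < Kopt N b σ) (hu : InH1 u) (hu0 : u ≠ 0)
    (hmass : Kopt N b σ * L2norm u ^ (2 * σ) ≤ σ + 1) (hgrad : 0 < gradL2sq u) :
    0 ≤ energy b σ u := by
  have hgradNorm : gradL2norm u ^ (2 : ℝ) = gradL2sq u := by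
    rw [Real.rpow_two, gradL2norm, Real.sq_sqrt hgrad.le]
  have hpot := potential_le_Kopt_mul hK hu hu0 (by
    rw [hcrit, hgradNorm]; exact mul_pos hgrad (Real.rpow_pos_of_pos (L2norm_pos hu hu0) _))
  rw [hcrit, hgradNorm, show 2 * σ + 2 - 2 = 2 * σ by ring] at hpot
  have hpot' : potential b σ u ≤ (2 * σ + 2) * (gradL2sq u / 2) := by
    calc potential b σ u ≤ gradL2sq u * (Kopt N b σ * L2norm u ^ (2 * σ)) := by linarith
      _ ≤ gradL2sq u * (σ + 1) := by gcongr
      _ = _ := by ring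
  rw [energy, sub_nonneg, one_div_mul_eq_div, div_le_iff₀' (by linarith)]
  linarith

end GagliardoNirenberg

lemma sq_le_two_mul_of_quadratic {E M P G : ℝ} (hM : 0 ≤ M)
    (hg : ∀ l : ℝ, 0 ≤ G + l ^ 2 * M - 2 * l * P)
    (hf : ∀ l : ℝ, 0 < G + l ^ 2 * M - 2 * l * P → 0 ≤ E + l ^ 2 / 2 * M - l * P) :
    P ^ 2 ≤ 2 * E * M := by
  rcases hM.eq_or_lt with rfl | hM
  · suffices P = 0 by simp [this]
    by_contra hP
    have h := hg ((G + 1) / (2 * P))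
    rw [mul_zero, add_zero, show 2 * ((G + 1) / (2 * P)) * P = G + 1 by field_simp] at h
    linarith
  by_contra! hdisc
  -- Step off the common vertex `P / M` of both parabolas by `t`, with `t² M` half the gap
  -- `P² / M - 2 E`: there `g > 0`, so `hf` applies, while `f` is still negative.
  have hg_vertex : ∀ t, G + (P / M + t) ^ 2 * M - 2 * (P / M + t) * P
      = (G - P ^ 2 / M) + t ^ 2 * M := fun t => by field_simp; ring
  have hf_vertex : ∀ t, E + (P / M + t) ^ 2 / 2 * M - (P / M + t) * P
      = -((P ^ 2 - 2 * E * M) / (2 * M)) + t ^ 2 * M / 2 := fun t => by field_simp; ring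
  have hgap : 0 < (P ^ 2 - 2 * E * M) / (2 * M) := div_pos (by linarith) (by linarith)
  set t := √((P ^ 2 - 2 * E * M) / 2) / M
  have ht : t ^ 2 * M = (P ^ 2 - 2 * E * M) / (2 * M) := by
    rw [div_pow, Real.sq_sqrt (by linarith)]
    field_simp
  have hg0 := hg (P / M + 0)
  rw [hg_vertex, zero_pow two_ne_zero, zero_mul, add_zero] at hg0
  have hft := hf (P / M + t) (by rw [hg_vertex, ht]; linarith)
  rw [hf_vertex, ht] at hft
  linarith

theorem banica_inequality_general
    (N : ℕ) (hN : 1 ≤ N) (b : ℝ) (hb2 : b < 2)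
    (σ : ℝ) (hσ : σ = (2 - b) / N)
    (v : RN N → ℂ) (hv : InH1 v)
    (hmass : L2norm v ^ ((4 - 2*b)/N) ≤ ((N:ℝ) + 2 - b) / (↑N * Kopt N b σ))
    (θ : RN N → ℝ) (hθ : Differentiable ℝ θ)
    (hint : Integrable (fun x => ‖v x‖^2 * ‖gradient θ x‖^2)) :
    (∫ x, (v x * star (fderiv ℝ v x (gradient θ x))).im) ^ 2 ≤
      2 * energy b σ v * ∫ x, ‖v x‖^2 * ‖gradient θ x‖^2 := by
  rcases eq_or_ne v 0 with rfl | hv0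
  · simp
  have hNpos : (0 : ℝ) < N := by exact_mod_cast hN
  have hcrit : (N : ℝ) * σ + b = 2 := by rw [hσ]; field_simp; ring
  have hσpos : 0 < σ := by rw [hσ]; exact div_pos (by linarith) hNpos
  rw [show (4 - 2 * b) / N = 2 * σ by rw [hσ]; ring, show ((N : ℝ) + 2 - b) / (N * Kopt N b σ)
    = (σ + 1) / Kopt N b σ by rw [hσ, div_add_one hNpos.ne', div_div]; ring] at hmass
  have hmassPos : 0 < L2norm v ^ (2 * σ) := Real.rpow_pos_of_pos (L2norm_pos hv hv0) _
  have hK : 0 < Kopt N b σ := by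
    by_contra! hK
    exact hmassPos.not_ge (hmass.trans (div_nonpos_of_nonneg_of_nonpos (by linarith) hK))
  rw [le_div_iff₀' hK] at hmass
  change (∫ x, momentumDensity v θ x) ^ 2 ≤ _
  refine sq_le_two_mul_of_quadratic (integral_nonneg fun x => by positivity)
    (fun l => by
      rw [← gradL2sq_modulate hv hθ hint l]
      exact integral_nonneg fun x => Finset.sum_nonneg fun i _ => sq_nonneg _) fun l hl => ?_
  rw [← energy_modulate hv hθ hint]
  exact energy_nonneg_of_mass_le hcrit (by linarith) hK (inH1_modulate hv hθ hint l)
    (modulate_ne_zero hv0 l) (by rwa [L2norm_modulate]) (by rwa [gradL2sq_modulate hv hθ hint])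

/-- Banica's Cauchy–Schwarz type inequality for functions with subcritical mass. -/
theorem banica_inequality
    (N : ℕ) (hN : 1 ≤ N) (b : ℝ) (hb0 : 0 < b) (hb2 : b < 2)
    (σ : ℝ) (hσ : σ = (2 - b) / N)
    (v : RN N → ℂ) (hv : InH1 v)
    (hmass : L2norm v ^ ((4 - 2*b)/N) ≤ ((N:ℝ) + 2 - b) / (↑N * Kopt N b σ))
    (θ : RN N → ℝ) (hθ : Differentiable ℝ θ)
    (hint : Integrable (fun x => ‖v x‖^2 * ‖gradient θ x‖^2)) :
    (∫ x, (v x * star (fderiv ℝ v x (gradient θ x))).im) ^ 2 ≤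
      2 * energy b σ v * ∫ x, ‖v x‖^2 * ‖gradient θ x‖^2 :=
  banica_inequality_general N hN b hb2 σ hσ v hv hmass θ hθ hint

end
end

section
/- Let N ≥ 3, 0 < b < 2 and 0 < σ < (2−b)/(N−2). Then there exist an exponent q with 2 < q < 2N/(N−2) and a constant C > 0, depending only on N, b and σ, such that for every v ∈ L^q(ℝᴺ;ℂ): ∫_{|x| ≤ 1} |x|^{−b}|v|^{2σ+2} dx ≤ C·‖v‖_{L^q(ℝᴺ)}^{2σ+2}. -/
open MeasureTheory Filter Topology

noncomputable section

/-!
Hölder's inequality on the unit ball `B` with conjugate exponents `p, γ` gives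
`∫_B |x|^{-b} |v|^{2σ+2} ≤ ‖|x|^{-b}‖_{L^p(B)} ‖v‖_{L^q}^{2σ+2}` with `q = (2σ+2)γ`.
The weight lies in `L^p(B)` as soon as `bp < N`, and the subcriticality `σ < (2-b)/(N-2)` leaves
room for a `γ` that makes both `bp < N` and `q < 2N/(N-2)` hold.
-/

open Metric

section SingularWeight

variable {E : Type*} [NormedAddCommGroup E] [NormedSpace ℝ E] [FiniteDimensional ℝ E]
  [MeasurableSpace E] [BorelSpace E] {μ : Measure E} [μ.IsAddHaarMeasure]

theorem integrableOn_closedBall_norm_rpow_neg (hd : 1 ≤ Module.finrank ℝ E) {s : ℝ}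
    (hs : s < Module.finrank ℝ E) (r : ℝ) :
    IntegrableOn (fun x : E ↦ ‖x‖ ^ (-s)) (closedBall 0 r) μ :=
  (locallyIntegrable_of_norm_le_rpow (C := 1) hd hs
    (ae_of_all _ fun x ↦ by simp [abs_of_nonneg (Real.rpow_nonneg (norm_nonneg x) _)])
    (measurable_norm.pow_const _).aestronglyMeasurable).integrableOn_isCompact
      (isCompact_closedBall 0 r)

theorem memLp_closedBall_norm_rpow_neg (hd : 1 ≤ Module.finrank ℝ E) {b p : ℝ} (hp : 0 < p)
    (hbp : b * p < Module.finrank ℝ E) (r : ℝ) :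
    MemLp (fun x : E ↦ ‖x‖ ^ (-b)) (ENNReal.ofReal p) (μ.restrict (closedBall 0 r)) := by
  have hp' : ENNReal.ofReal p ≠ 0 := by simpa using hp
  rw [← memLp_norm_rpow_iff (measurable_norm.pow_const _).aestronglyMeasurable hp'
      ENNReal.ofReal_ne_top,
    ENNReal.div_self hp' ENNReal.ofReal_ne_top, memLp_one_iff_integrable,
    ENNReal.toReal_ofReal hp.le]
  refine (integrableOn_closedBall_norm_rpow_neg (μ := μ) hd hbp r).congr_fun (fun x _ ↦ ?_)
    measurableSet_closedBall
  rw [Real.norm_of_nonneg (Real.rpow_nonneg (norm_nonneg x) _), ← Real.rpow_mul (norm_nonneg x),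
    neg_mul]

end SingularWeight

theorem setIntegral_mul_norm_rpow_le {α F : Type*} [MeasurableSpace α] {μ : Measure α}
    [NormedAddCommGroup F] {s : Set α} {w : α → ℝ} {f : α → F} {p γ r q : ℝ}
    (hpγ : p.HolderConjugate γ) (hr : 0 < r) (hq : q = r * γ) (hw0 : ∀ x, 0 ≤ w x)
    (hw : MemLp w (ENNReal.ofReal p) (μ.restrict s)) (hf : MemLp f (ENNReal.ofReal q) μ) :
    ∫ x in s, w x * ‖f x‖ ^ r ∂μ ≤
      (∫ x in s, w x ^ p ∂μ) ^ (1 / p) * (∫ x, ‖f x‖ ^ q ∂μ) ^ (r / q) := by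
  have hq0 : 0 < q := hq ▸ mul_pos hr hpγ.symm.pos
  have hfr : MemLp (fun x ↦ ‖f x‖ ^ r) (ENNReal.ofReal γ) (μ.restrict s) := by
    have h := (hf.restrict s).norm_rpow_div (ENNReal.ofReal r)
    rwa [ENNReal.toReal_ofReal hr.le, ← ENNReal.ofReal_div_of_pos hr, hq,
      mul_div_cancel_left₀ _ hr.ne'] at h
  have hpow : ∀ x, (‖f x‖ ^ r) ^ γ = ‖f x‖ ^ q := fun x ↦ by
    rw [← Real.rpow_mul (norm_nonneg _), hq]
  have hint : Integrable (fun x ↦ ‖f x‖ ^ q) μ := by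
    simpa [ENNReal.toReal_ofReal hq0.le] using
      hf.integrable_norm_rpow (by simpa using hq0) ENNReal.ofReal_ne_top
  have hrq : r / q = 1 / γ := by rw [hq]; field_simp
  calc ∫ x in s, w x * ‖f x‖ ^ r ∂μ
      ≤ (∫ x in s, w x ^ p ∂μ) ^ (1 / p) * (∫ x in s, (‖f x‖ ^ r) ^ γ ∂μ) ^ (1 / γ) :=
        integral_mul_le_Lp_mul_Lq_of_nonneg hpγ (ae_of_all _ hw0)
          (ae_of_all _ fun x ↦ Real.rpow_nonneg (norm_nonneg _) _) hw hfr
    _ ≤ (∫ x in s, w x ^ p ∂μ) ^ (1 / p) * (∫ x, ‖f x‖ ^ q ∂μ) ^ (r / q) := by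
        simp only [hpow, hrq]
        gcongr
        · exact Real.rpow_nonneg (integral_nonneg fun x ↦ Real.rpow_nonneg (hw0 x) _) _
        · exact one_div_nonneg.2 hpγ.symm.nonneg
        · exact ae_of_all _ fun x ↦ Real.rpow_nonneg (norm_nonneg _) _
        · exact Measure.restrict_le_self

theorem exists_holderConjugate_window {n b σ : ℝ} (hn : 2 < n) (hb : 0 < b) (hσ0 : 0 < σ)
    (hσ : σ < (2 - b) / (n - 2)) :
    ∃ p γ : ℝ, p.HolderConjugate γ ∧ b * p < n ∧ 2 < (2 * σ + 2) * γ ∧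
      (2 * σ + 2) * γ < 2 * n / (n - 2) := by
  have hn2 : 0 < n - 2 := by linarith
  have hσn : σ * (n - 2) < 2 - b := (lt_div_iff₀ hn2).mp hσ
  have hbn : 0 < n - b := by nlinarith
  -- for `γ > 1` and `p = γ / (γ - 1)`: `b * p < n ↔ n / (n - b) < γ`, and
  -- `(2σ+2)γ < 2n/(n-2) ↔ γ < n / ((σ+1)(n-2))`
  have hwindow : n / (n - b) < n / ((σ + 1) * (n - 2)) :=
    div_lt_div_of_pos_left (by linarith) (by positivity) (by linarith)
  obtain ⟨γ, hlo, hhi⟩ := exists_between hwindow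
  have hγ1 : 1 < γ := lt_of_le_of_lt ((one_le_div hbn).2 (by linarith)) hlo
  refine ⟨γ.conjExponent, γ, (Real.HolderConjugate.conjExponent hγ1).symm, ?_, ?_, ?_⟩
  · have h := (div_lt_iff₀ hbn).mp hlo
    rw [Real.conjExponent, mul_div_assoc', div_lt_iff₀ (by linarith)]
    linarith
  · nlinarith
  · calc (2 * σ + 2) * γ < (2 * σ + 2) * (n / ((σ + 1) * (n - 2))) := by gcongr
      _ = 2 * n / (n - 2) := by field_simp

theorem singular_weight_unit_ball_estimate_general
    (N : ℕ) (hN : 3 ≤ N) (b σ : ℝ) (hb0 : 0 < b)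
    (hσ0 : 0 < σ) (hσu : σ < (2 - b) / ((N:ℝ) - 2)) :
    ∃ q : ℝ, 2 < q ∧ q < 2*N/((N:ℝ) - 2) ∧
      ∃ C : ℝ, 0 < C ∧ ∀ v : RN N → ℂ, MemLp v (ENNReal.ofReal q) volume →
        (∫ x in {x : RN N | ‖x‖ ≤ 1}, ‖x‖ ^ (-b) * ‖v x‖ ^ (2*σ+2)) ≤
          C * (∫ x, ‖v x‖ ^ q) ^ ((2*σ+2)/q) := by
  have hdim : Module.finrank ℝ (RN N) = N := finrank_euclideanSpace_fin
  obtain ⟨p, γ, hpγ, hbp, hq2, hqN⟩ :=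
    exists_holderConjugate_window (by exact_mod_cast hN) hb0 hσ0 hσu
  have hball : {x : RN N | ‖x‖ ≤ 1} = closedBall 0 1 := by ext; simp
  have hw := memLp_closedBall_norm_rpow_neg (μ := volume) (by rw [hdim]; omega) hpγ.pos
    (by rwa [hdim]) 1
  refine ⟨_, hq2, hqN, (∫ x in closedBall (0 : RN N) 1, (‖x‖ ^ (-b)) ^ p) ^ (1 / p) + 1,
    by positivity, fun v hv ↦ ?_⟩
  rw [hball]
  refine (setIntegral_mul_norm_rpow_le hpγ (by positivity) rfl
    (fun x ↦ Real.rpow_nonneg (norm_nonneg x) _) hw hv).trans ?_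
  gcongr
  exact (lt_add_one _).le

/-- Hölder control of the singular-weight integral over the unit ball. -/
theorem singular_weight_unit_ball_estimate
    (N : ℕ) (hN : 3 ≤ N) (b σ : ℝ) (hb0 : 0 < b) (hb2 : b < 2)
    (hσ0 : 0 < σ) (hσu : σ < (2 - b) / ((N:ℝ) - 2)) :
    ∃ q : ℝ, 2 < q ∧ q < 2*N/((N:ℝ) - 2) ∧
      ∃ C : ℝ, 0 < C ∧ ∀ v : RN N → ℂ, MemLp v (ENNReal.ofReal q) volume →
        (∫ x in {x : RN N | ‖x‖ ≤ 1}, ‖x‖ ^ (-b) * ‖v x‖ ^ (2*σ+2)) ≤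
          C * (∫ x, ‖v x‖ ^ q) ^ ((2*σ+2)/q) :=
  singular_weight_unit_ball_estimate_general N hN b σ hb0 hσ0 hσu

end
end

section
/- Let N ≥ 2 and p ≥ 1. There exists a constant C_N > 0, depending only on N, such that for every radial f ∈ L^p(ℝᴺ;ℂ), every x₀ ∈ ℝᴺ and every r > 0 with |x₀| ≥ 2r: ∫_{|x₀|−r ≤ |x| ≤ |x₀|+r} |f(x)|^p dx ≥ C_N·(|x₀|/r)^{N−1}·∫_{|x−x₀| ≤ r} |f(x)|^p dx. -/
open MeasureTheory Filter Topology

noncomputable section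

/-!
Take a maximal `2r`-separated subset `S` of the sphere of radius `‖x₀‖`. The closed `r`-balls
around its points are disjoint, lie in the annulus, and by rotation invariance each carries the
same `L^p` mass as `closedBall x₀ r`. By maximality the `3r`-balls around `S` cover the annulus,
so comparing Haar volumes gives
`#S ≥ ((‖x₀‖ + r)^N - (‖x₀‖ - r)^N) / (3r)^N ≥ 4 / 6^N * (‖x₀‖ / r)^(N - 1)`.
-/

open Metric Set Module
open scoped NNReal ENNReal

theorem TotallyBounded.packingNumber_ne_top {X : Type*} [PseudoEMetricSpace X] {s : Set X}
    (hs : TotallyBounded s) {ε : ℝ≥0} (hε : ε ≠ 0) : packingNumber ε s ≠ ⊤ := by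
  obtain ⟨C, -, hC, hcover⟩ := exists_finite_isCover_of_totallyBounded (ε := ε / 2) (by simpa) hs
  have h := packingNumber_two_mul_le_externalCoveringNumber (ε / 2) s
  rw [mul_div_cancel₀ ε two_ne_zero] at h
  exact (h.trans_lt ((hcover.externalCoveringNumber_le_encard).trans_lt hC.encard_lt_top)).ne

theorem closedBall_subset_norm_preimage_Icc {E : Type*} [SeminormedAddCommGroup E] (x : E)
    (r : ℝ) :
    closedBall x r ⊆ norm ⁻¹' Icc (‖x‖ - r) (‖x‖ + r) := by
  intro z hz
  have := abs_sub_le_iff.1 ((abs_norm_sub_norm_le z x).trans (mem_closedBall_iff_norm.1 hz))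
  exact ⟨by linarith, by linarith⟩

theorem four_div_six_pow_mul_le_add_pow_sub_sub_pow {R r : ℝ} (hr : 0 < r) (hRr : 2 * r ≤ R)
    {d : ℕ} (hd : d ≠ 0) :
    4 / 6 ^ d * (R / r) ^ (d - 1) * (3 * r) ^ d ≤ (R + r) ^ d - (R - r) ^ d := by
  obtain ⟨n, rfl⟩ := Nat.exists_eq_succ_of_ne_zero hd
  have hlhs : 4 / 6 ^ (n + 1) * (R / r) ^ n * (3 * r) ^ (n + 1) = 2 * r * (R / 2) ^ n := by
    rw [div_pow, div_pow, show (6 : ℝ) = 2 * 3 by norm_num, mul_pow, mul_pow]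
    field_simp
    ring
  rw [Nat.succ_sub_one, hlhs]
  calc 2 * r * (R / 2) ^ n ≤ 2 * r * (R - r) ^ n := by gcongr <;> linarith
    _ = (R - r) ^ n * (R + r) - (R - r) ^ (n + 1) := by ring
    _ ≤ (R + r) ^ (n + 1) - (R - r) ^ (n + 1) := by
        rw [pow_succ (R + r)]
        gcongr <;> linarith

section NormedSpace

variable {E : Type*} [NormedAddCommGroup E] [NormedSpace ℝ E]

theorem exists_mem_sphere_dist_eq {z : E} (hz : z ≠ 0) {R : ℝ} (hR : 0 ≤ R) :
    ∃ y ∈ sphere (0 : E) R, dist z y = |‖z‖ - R| := by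
  have hz' : 0 < ‖z‖ := norm_pos_iff.2 hz
  refine ⟨(R / ‖z‖) • z, ?_, ?_⟩
  · rw [mem_sphere_zero_iff_norm, norm_smul, Real.norm_of_nonneg (by positivity),
      div_mul_cancel₀ _ hz'.ne']
  · have : z - (R / ‖z‖) • z = (1 - R / ‖z‖) • z := by rw [sub_smul, one_smul]
    rw [dist_eq_norm, this, norm_smul, Real.norm_eq_abs, ← abs_of_pos hz', ← abs_mul,
      abs_of_pos hz', sub_mul, one_mul, div_mul_cancel₀ _ hz'.ne']

theorem closedBall_subset_closedBall_union_biUnion_of_sphere_subset {R r ε : ℝ} (hr : 0 ≤ r)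
    (hrR : r ≤ R) {S : Set E} (hS : sphere (0 : E) R ⊆ ⋃ x ∈ S, closedBall x ε) :
    closedBall (0 : E) (R + r) ⊆ closedBall 0 (R - r) ∪ ⋃ x ∈ S, closedBall x (ε + r) := by
  intro z hz
  rw [mem_closedBall_zero_iff] at hz
  by_cases hzR : ‖z‖ ≤ R - r
  · exact Or.inl (mem_closedBall_zero_iff.2 hzR)
  have hz0 : z ≠ 0 := norm_pos_iff.1 (by linarith)
  obtain ⟨y, hy, hzy⟩ := exists_mem_sphere_dist_eq hz0 (hr.trans hrR)
  obtain ⟨x, hx, hyx⟩ := mem_iUnion₂.1 (hS hy)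
  refine Or.inr (mem_iUnion₂.2 ⟨x, hx, ?_⟩)
  have : dist z y ≤ r := hzy ▸ abs_le.2 ⟨by linarith, by linarith⟩
  rw [mem_closedBall] at hyx ⊢
  linarith [dist_triangle z y x]

variable [FiniteDimensional ℝ E]

theorem add_pow_sub_sub_pow_le_card_mul_pow {R r ε : ℝ} (hr : 0 ≤ r) (hrR : r ≤ R) (hε : 0 ≤ ε)
    {S : Finset E} (hS : sphere (0 : E) R ⊆ ⋃ x ∈ S, closedBall x ε) :
    (R + r) ^ finrank ℝ E - (R - r) ^ finrank ℝ E ≤ S.card * (ε + r) ^ finrank ℝ E := by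
  let _ : MeasurableSpace E := borel E
  have _ : BorelSpace E := ⟨rfl⟩
  set μ : Measure E := Measure.addHaar
  have hv : 0 < μ.real (ball 0 1) :=
    ENNReal.toReal_pos (measure_ball_pos μ 0 one_pos).ne' measure_ball_lt_top.ne
  have hbdd : Bornology.IsBounded (closedBall (0 : E) (R - r) ∪ ⋃ x ∈ S, closedBall x (ε + r)) :=
    isBounded_closedBall.union
      ((Bornology.isBounded_biUnion_finset S).2 fun _ _ ↦ isBounded_closedBall)
  have hcover := closedBall_subset_closedBall_union_biUnion_of_sphere_subset hr hrR hS
  have hvol : (R + r) ^ finrank ℝ E * μ.real (ball 0 1) ≤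
      (R - r) ^ finrank ℝ E * μ.real (ball 0 1) +
        S.card * ((ε + r) ^ finrank ℝ E * μ.real (ball 0 1)) := by
    calc (R + r) ^ finrank ℝ E * μ.real (ball 0 1) = μ.real (closedBall 0 (R + r)) :=
          (Measure.addHaar_real_closedBall μ 0 (by linarith)).symm
      _ ≤ μ.real (closedBall 0 (R - r)) + μ.real (⋃ x ∈ S, closedBall x (ε + r)) :=
          (measureReal_mono hcover hbdd.measure_lt_top.ne).trans (measureReal_union_le _ _)
      _ ≤ μ.real (closedBall 0 (R - r)) + ∑ x ∈ S, μ.real (closedBall x (ε + r)) := by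
          gcongr; exact measureReal_biUnion_finset_le _ _
      _ = _ := by
          simp only [Measure.addHaar_real_closedBall μ _ (by linarith : 0 ≤ R - r),
            Measure.addHaar_real_closedBall μ _ (by linarith : 0 ≤ ε + r), Finset.sum_const,
            nsmul_eq_mul]
  exact le_of_mul_le_mul_right (by linarith) hv

theorem exists_finset_subset_sphere_pairwiseDisjoint_card_ge [Nontrivial E] {R r : ℝ}
    (hr : 0 < r) (hRr : 2 * r ≤ R) :
    ∃ S : Finset E, ↑S ⊆ sphere (0 : E) R ∧ (S : Set E).PairwiseDisjoint (closedBall · r) ∧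
      4 / 6 ^ finrank ℝ E * (R / r) ^ (finrank ℝ E - 1) ≤ S.card := by
  set ε : ℝ≥0 := ⟨2 * r, by positivity⟩
  have hε : ε ≠ 0 := ne_of_gt (by change 0 < 2 * r; positivity)
  have hpack := (isCompact_sphere (0 : E) R).totallyBounded.packingNumber_ne_top hε
  have hfin : (maximalSeparatedSet ε (sphere (0 : E) R)).Finite := by
    rw [← encard_ne_top_iff, encard_maximalSeparatedSet hpack]
    exact hpack
  refine ⟨hfin.toFinset, by simpa using maximalSeparatedSet_subset, ?_, ?_⟩
  · rw [hfin.coe_toFinset]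
    intro x hx y hy hxy
    apply closedBall_disjoint_closedBall
    have hsep : (ε : ℝ≥0∞) < edist x y := isSeparated_maximalSeparatedSet hx hy hxy
    rw [edist_nndist, ENNReal.coe_lt_coe, ← NNReal.coe_lt_coe, coe_nndist] at hsep
    change 2 * r < dist x y at hsep
    linarith
  · have hcover : sphere 0 R ⊆ ⋃ x ∈ hfin.toFinset, closedBall x (2 * r) := by
      have h := isCover_iff_subset_iUnion_closedBall.1 (isCover_maximalSeparatedSet hpack)
      rwa [← hfin.coe_toFinset] at h
    have hvol := add_pow_sub_sub_pow_le_card_mul_pow hr.le (by linarith) (by positivity) hcover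
    rw [show 2 * r + r = 3 * r by ring] at hvol
    have harith :=
      four_div_six_pow_mul_le_add_pow_sub_sub_pow hr hRr (finrank_pos (R := ℝ) (M := E)).ne'
    exact le_of_mul_le_mul_right (harith.trans hvol) (by positivity)

end NormedSpace

theorem setIntegral_closedBall_eq_of_norm_eq {E F : Type*} [NormedAddCommGroup E]
    [InnerProductSpace ℝ E] [FiniteDimensional ℝ E] [MeasurableSpace E] [BorelSpace E]
    [NormedAddCommGroup F] [NormedSpace ℝ F] {g : E → F} (hg : ∀ x y : E, ‖x‖ = ‖y‖ → g x = g y)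
    {x y : E} (hxy : ‖x‖ = ‖y‖) (r : ℝ) :
    ∫ z in closedBall x r, g z = ∫ z in closedBall y r, g z := by
  set e : E ≃ₗᵢ[ℝ] E := Submodule.reflection (ℝ ∙ (x - y))ᗮ
  have hex : e x = y := Submodule.reflection_sub hxy
  rw [← hex, ← e.image_closedBall,
    e.measurePreserving.setIntegral_image_emb e.toMeasurableEquiv.measurableEmbedding]
  exact setIntegral_congr_fun measurableSet_closedBall fun z _ ↦ (hg _ _ (e.norm_map z)).symm

theorem sum_setIntegral_le_setIntegral_of_pairwiseDisjoint {X ι : Type*} [MeasurableSpace X]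
    {μ : Measure X} {f : X → ℝ} {t : Set X} (S : Finset ι) {s : ι → Set X}
    (hs : ∀ i ∈ S, MeasurableSet (s i)) (hdisj : (S : Set ι).PairwiseDisjoint s)
    (hst : ∀ i ∈ S, s i ⊆ t) (hf : 0 ≤ᵐ[μ.restrict t] f) (hft : IntegrableOn f t μ) :
    ∑ i ∈ S, ∫ x in s i, f x ∂μ ≤ ∫ x in t, f x ∂μ := by
  rw [← integral_biUnion_finset S hs hdisj fun i hi ↦ hft.mono_set (hst i hi)]
  exact setIntegral_mono_set hft hf (iUnion₂_subset hst).eventuallyLE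

theorem radial_annulus_lower_bound_general
    (N : ℕ) :
    ∃ C : ℝ, 0 < C ∧ ∀ p : ℝ, 1 ≤ p →
      ∀ f : RN N → ℂ, IsRadial f → MemLp f (ENNReal.ofReal p) volume →
        ∀ (x₀ : RN N) (r : ℝ), 0 < r → 2*r ≤ ‖x₀‖ →
          C * (‖x₀‖ / r) ^ ((N:ℝ) - 1) *
              (∫ x in Metric.closedBall x₀ r, ‖f x‖ ^ p) ≤
            ∫ x in {x : RN N | ‖x₀‖ - r ≤ ‖x‖ ∧ ‖x‖ ≤ ‖x₀‖ + r}, ‖f x‖ ^ p := by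
  refine ⟨4 / 6 ^ N, by positivity, fun p hp f hf hfp x₀ r hr hrx₀ ↦ ?_⟩
  have : Nontrivial (RN N) := nontrivial_of_ne x₀ 0 (norm_pos_iff.1 (by linarith))
  have hN : 0 < N := by simpa using finrank_pos (R := ℝ) (M := RN N)
  obtain ⟨S, hS_sphere, hS_disj, hS_card⟩ :=
    exists_finset_subset_sphere_pairwiseDisjoint_card_ge (E := RN N) hr hrx₀
  rw [finrank_euclideanSpace_fin] at hS_card
  have hint : Integrable fun x ↦ ‖f x‖ ^ p := by
    simpa [ENNReal.toReal_ofReal (by linarith : 0 ≤ p)] using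
      hfp.integrable_norm_rpow (by simp; linarith) ENNReal.ofReal_ne_top
  have hball (x : RN N) (hx : x ∈ S) :
      ∫ y in closedBall x r, ‖f y‖ ^ p = ∫ y in closedBall x₀ r, ‖f y‖ ^ p :=
    setIntegral_closedBall_eq_of_norm_eq (fun y z h ↦ by rw [hf y z h])
      (mem_sphere_zero_iff_norm.1 (hS_sphere hx)) r
  calc 4 / 6 ^ N * (‖x₀‖ / r) ^ ((N : ℝ) - 1) * ∫ x in closedBall x₀ r, ‖f x‖ ^ p
      = 4 / 6 ^ N * (‖x₀‖ / r) ^ (N - 1) * ∫ x in closedBall x₀ r, ‖f x‖ ^ p := by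
        rw [← Nat.cast_one, ← Nat.cast_sub hN, Real.rpow_natCast]
    _ ≤ S.card * ∫ x in closedBall x₀ r, ‖f x‖ ^ p := by gcongr
    _ = ∑ x ∈ S, ∫ y in closedBall x r, ‖f y‖ ^ p := by
        rw [Finset.sum_congr rfl hball, Finset.sum_const, nsmul_eq_mul]
    _ ≤ _ := by
        refine sum_setIntegral_le_setIntegral_of_pairwiseDisjoint S
          (fun _ _ ↦ measurableSet_closedBall) hS_disj (fun x hx ↦ ?_)
          (ae_of_all _ fun _ ↦ by positivity) hint.integrableOn
        rw [← mem_sphere_zero_iff_norm.1 (hS_sphere hx)]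
        exact closedBall_subset_norm_preimage_Icc x r

/-- For radial functions, the `L^p` mass of an annulus dominates
`(|x₀|/r)^{N−1}` times the mass of a ball centered at `x₀`. -/
theorem radial_annulus_lower_bound
    (N : ℕ) (hN : 2 ≤ N) :
    ∃ C : ℝ, 0 < C ∧ ∀ p : ℝ, 1 ≤ p →
      ∀ f : RN N → ℂ, IsRadial f → MemLp f (ENNReal.ofReal p) volume →
        ∀ (x₀ : RN N) (r : ℝ), 0 < r → 2*r ≤ ‖x₀‖ →
          C * (‖x₀‖ / r) ^ ((N:ℝ) - 1) *
              (∫ x in Metric.closedBall x₀ r, ‖f x‖ ^ p) ≤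
            ∫ x in {x : RN N | ‖x₀‖ - r ≤ ‖x‖ ∧ ‖x‖ ≤ ‖x₀‖ + r}, ‖f x‖ ^ p :=
  radial_annulus_lower_bound_general N

end
end
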